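/- Let c > 0, λ ∈ ℝ and b > 0. Suppose w_B, w_F : [0, b) → ℝ are differentiable with w_B′(x) = f_λ^c(w_B(x)) and w_F′(x) = f_λ^{−c}(w_F(x)) for all x ∈ [0, b), and w_B(0) = w_F(0) = 0. Then w_B(x) > w_F(x) for every x ∈ (0, b). -/
import Mathlib


open Set

/-- The right-hand side f_λ^c(z) of the traveling-wave ODE:
f_λ^c(z) = (c/√(1+z²) − Φ(c/√(1+z²)) + λ)·(1+z²)^{3/2}. -/
noncomputable def fODE (Φ : ℝ → ℝ) (c lam z : ℝ) : ℝ :=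
  (c / Real.sqrt (1 + z ^ 2) - Φ (c / Real.sqrt (1 + z ^ 2)) + lam) *
    (1 + z ^ 2) ^ ((3 : ℝ) / 2)

lemma fODE_neg_lt (Φ : ℝ → ℝ) {J : ℝ} (hJ1 : J < 1)
    (hΦlip : ∀ a b : ℝ, |Φ a - Φ b| ≤ J * |a - b|)
    {c : ℝ} (hc : 0 < c) (lam z : ℝ) :
    fODE Φ (-c) lam z < fODE Φ c lam z := by
  have hs : 0 < Real.sqrt (1 + z ^ 2) := Real.sqrt_pos.2 (by positivity)
  set u := c / Real.sqrt (1 + z ^ 2) with hu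
  have hupos : 0 < u := div_pos hc hs
  have h1 : (-c) / Real.sqrt (1 + z ^ 2) = -u := by rw [neg_div]
  unfold fODE
  rw [h1]
  have hpow : 0 < (1 + z ^ 2 : ℝ) ^ ((3 : ℝ) / 2) := by positivity
  apply mul_lt_mul_of_pos_right _ hpow
  have hlip := hΦlip u (-u)
  have habs : |u - -u| = 2 * u := by
    rw [abs_of_pos (by linarith)]; ring
  rw [habs] at hlip
  have := abs_le.1 hlip
  nlinarith [this.1, this.2]

/-- ODE comparison. If w_B′ = f_λ^c(w_B), w_F′ = f_λ^{−c}(w_F)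
on [0, b) with w_B(0) = w_F(0) = 0 and c > 0, then w_B > w_F on (0, b). -/
theorem stmt15 (Φ : ℝ → ℝ) (J : ℝ) (hJ0 : 0 ≤ J) (hJ1 : J < 1)
    (hΦlip : ∀ a b : ℝ, |Φ a - Φ b| ≤ J * |a - b|)
    (hΦbd : ∃ B : ℝ, ∀ x : ℝ, |Φ x| ≤ B)
    (c lam b : ℝ) (hc : 0 < c) (hb : 0 < b)
    (wB wF : ℝ → ℝ)
    (hwB : ∀ x ∈ Ico (0:ℝ) b,
      HasDerivWithinAt wB (fODE Φ c lam (wB x)) (Ico (0:ℝ) b) x)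
    (hwF : ∀ x ∈ Ico (0:ℝ) b,
      HasDerivWithinAt wF (fODE Φ (-c) lam (wF x)) (Ico (0:ℝ) b) x)
    (hB0 : wB 0 = 0) (hF0 : wF 0 = 0) :
    ∀ x ∈ Ioo (0:ℝ) b, wF x < wB x := by
  -- Step 1: weak inequality on Ico 0 b.
  have hmem : ∀ x ∈ Ico (0:ℝ) b, Ico (0:ℝ) b ∈ nhdsWithin x (Ici x) := by
    intro x hx
    apply mem_nhdsWithin.2
    exact ⟨Iio b, isOpen_Iio, hx.2, fun y hy => ⟨le_trans hx.1 hy.2, hy.1⟩⟩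
  have hle : ∀ x ∈ Ico (0:ℝ) b, wF x ≤ wB x := by
    intro t ht
    have hsub : Icc (0:ℝ) t ⊆ Ico (0:ℝ) b := fun y hy => ⟨hy.1, lt_of_le_of_lt hy.2 ht.2⟩
    have hsub' : Ico (0:ℝ) t ⊆ Ico (0:ℝ) b := fun y hy => ⟨hy.1, lt_trans hy.2 ht.2⟩
    have key : ∀ ⦃x⦄, x ∈ Icc (0:ℝ) t → wF x ≤ wB x :=
      image_le_of_deriv_right_lt_deriv_boundary'
        (fun y hy => ((hwF y (hsub hy)).continuousWithinAt).mono hsub)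
        (fun x hx => (hwF x (hsub' hx)).mono_of_mem_nhdsWithin (hmem x (hsub' hx)))
        (by rw [hB0, hF0])
        (fun y hy => ((hwB y (hsub hy)).continuousWithinAt).mono hsub)
        (fun x hx => (hwB x (hsub' hx)).mono_of_mem_nhdsWithin (hmem x (hsub' hx)))
        (fun x hx hEq => by rw [hEq]; exact fODE_neg_lt Φ hJ1 hΦlip hc lam (wB x))
    exact key ⟨ht.1, le_refl t⟩
  -- Step 2: strict inequality.
  intro x hx
  by_contra h
  have hEq : wF x = wB x := le_antisymm (hle x ⟨hx.1.le, hx.2⟩) (not_lt.1 h)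
  have hnhds : Ico (0:ℝ) b ∈ nhds x :=
    mem_nhds_iff.2 ⟨Ioo (0:ℝ) b, Ioo_subset_Ico_self, isOpen_Ioo, hx⟩
  have hgB : HasDerivAt wB (fODE Φ c lam (wB x)) x :=
    (hwB x ⟨hx.1.le, hx.2⟩).hasDerivAt hnhds
  have hgF : HasDerivAt wF (fODE Φ (-c) lam (wF x)) x :=
    (hwF x ⟨hx.1.le, hx.2⟩).hasDerivAt hnhds
  have hg : HasDerivAt (fun y => wB y - wF y)
      (fODE Φ c lam (wB x) - fODE Φ (-c) lam (wF x)) x := hgB.sub hgF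
  have hmin : IsLocalMin (fun y => wB y - wF y) x := by
    apply Filter.eventually_of_mem hnhds
    intro y hy
    have := hle y hy
    simp only [hEq]
    linarith
  have hzero := hmin.hasDerivAt_eq_zero hg
  have hpos : 0 < fODE Φ c lam (wB x) - fODE Φ (-c) lam (wF x) := by
    rw [hEq]
    linarith [fODE_neg_lt Φ hJ1 hΦlip hc lam (wB x)]
  rw [hzero] at hpos
  exact lt_irrefl 0 hpos
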